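/- Let d ≥ 2. For each i ∈ {1,…,d} let α_i ∈ (0,1), β_i = √(α_i(1−α_i)), γ_i = 1 − 2α_i, and set q_i = β_i(E_{0,i} + E_{i,0}) + γ_i E_{i,i} ∈ M_{d+1}(ℂ), where rows and columns are indexed by {0,1,…,d}. Let φ : M_{d+1}(ℂ) → ℂ be φ(M) = M_{0,0}, and let A_i be the smallest (not necessarily unital) subalgebra of M_{d+1}(ℂ) containing q_i. Then A₁,…,A_d are Boolean independent with respect to φ: for every n ≥ 1, every u : {1,…,n} → {1,…,d} with u(j) ≠ u(j+1) for all 1 ≤ j < n, and every choice of a_j ∈ A_{u(j)}, one has φ(a₁a₂⋯aₙ) = φ(a₁)φ(a₂)⋯φ(aₙ). -/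

import Mathlib

/-- `q_i = β_i (E_{0,i} + E_{i,0}) + γ_i E_{i,i}` in `M_{d+1}(ℂ)` with
`β_i = √(α_i(1-α_i))` and `γ_i = 1 - 2α_i`. -/
noncomputable def qBool (d : ℕ) (α : Fin d → ℝ) (i : Fin d) :
    Matrix (Fin (d+1)) (Fin (d+1)) ℂ :=
  (Real.sqrt (α i * (1 - α i)) : ℂ) •
      (Matrix.single (0 : Fin (d+1)) i.succ (1 : ℂ)
        + Matrix.single i.succ (0 : Fin (d+1)) (1 : ℂ))
    + ((1 - 2 * α i : ℝ) : ℂ) • Matrix.single i.succ i.succ (1 : ℂ)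

/-- support predicate: matrix supported on rows/cols `{0, i.succ}` -/
def suppBool (d : ℕ) (i : Fin d) (M : Matrix (Fin (d+1)) (Fin (d+1)) ℂ) : Prop :=
  ∀ k l : Fin (d+1), (¬(k = 0 ∨ k = i.succ) ∨ ¬(l = 0 ∨ l = i.succ)) → M k l = 0

lemma suppBool_of_mem (d : ℕ) (α : Fin d → ℝ) (i : Fin d)
    (M : Matrix (Fin (d+1)) (Fin (d+1)) ℂ)
    (hM : M ∈ NonUnitalAlgebra.adjoin ℂ {qBool d α i}) : suppBool d i M := by
  induction hM using NonUnitalAlgebra.adjoin_induction with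
  | mem x hx =>
      rcases hx with rfl
      intro k l hkl
      simp only [qBool, Matrix.add_apply, Matrix.smul_apply, Matrix.add_apply]
      rw [Matrix.single_apply_of_ne, Matrix.single_apply_of_ne,
        Matrix.single_apply_of_ne] <;> [skip; tauto; tauto; tauto]
      simp
  | add x y hx hy px py => intro k l hkl; simp [Matrix.add_apply, px k l hkl, py k l hkl]
  | zero => intro k l hkl; simp
  | mul x y hx hy px py =>
      intro k l hkl
      rw [Matrix.mul_apply]
      apply Finset.sum_eq_zero
      intro m _
      rcases hkl with h | h
      · rw [px k m (Or.inl h), zero_mul]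
      · rw [py m l (Or.inr h), mul_zero]
  | smul r x hx px => intro k l hkl; simp [Matrix.smul_apply, px k l hkl]

theorem statement6 (d : ℕ) (hd : 2 ≤ d) (α : Fin d → ℝ)
    (hα : ∀ i, α i ∈ Set.Ioo (0 : ℝ) 1)
    (n : ℕ) (hn : 1 ≤ n) (u : ℕ → Fin d) (hu : ∀ j, j + 1 < n → u j ≠ u (j + 1))
    (a : ℕ → Matrix (Fin (d+1)) (Fin (d+1)) ℂ)
    (ha : ∀ j < n, a j ∈ NonUnitalAlgebra.adjoin ℂ {qBool d α (u j)}) :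
    (((List.range n).map a).prod) 0 0 = ∏ j ∈ Finset.range n, (a j) 0 0 := by
  have key : ∀ m, 1 ≤ m → m ≤ n →
      (((List.range m).map a).prod) 0 0 = (∏ j ∈ Finset.range m, (a j) 0 0) ∧
      (∀ k : Fin (d+1), k ≠ 0 → k ≠ (u (m-1)).succ →
        (((List.range m).map a).prod) 0 k = 0) := by
    intro m
    induction m with
    | zero => omega
    | succ m ih =>
      intro _ hmn
      have hsupp : suppBool d (u m) (a m) :=
        suppBool_of_mem d α (u m) (a m) (ha m (by omega))
      rcases Nat.eq_zero_or_pos m with rfl | hm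
      · constructor
        · simp [List.range_succ]
        · intro k hk0 hks
          simp only [List.range_succ, List.range_zero, List.map_append, List.map_cons,
            List.map_nil, List.prod_append, List.prod_cons, List.prod_nil, one_mul, mul_one]
          exact hsupp 0 k (Or.inr (by push_neg; exact ⟨hk0, hks⟩))
      · obtain ⟨h1, h2⟩ := ih hm (by omega)
        have hne : u (m-1) ≠ u m := by
          have := hu (m-1) (by omega)
          rwa [Nat.sub_add_cancel hm] at this
        have hsne : (u (m-1)).succ ≠ (u m).succ := fun h => hne (Fin.succ_injective _ h)
        have hL : ((List.range (m+1)).map a).prod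
            = ((List.range m).map a).prod * a m := by
          rw [List.range_succ, List.map_append]; simp
        set L := ((List.range m).map a).prod with hLdef
        have hrow : ∀ l, (a m) ((u (m-1)).succ) l = 0 := fun l =>
          hsupp _ _ (Or.inl (by push_neg; exact ⟨Fin.succ_ne_zero _, hsne⟩))
        constructor
        · rw [hL, Matrix.mul_apply, Finset.range_add_one, Finset.prod_insert (by simp),
            mul_comm ((a m) 0 0), ← h1]
          rw [Finset.sum_eq_single (0 : Fin (d+1))]
          · intro k _ hk0
            by_cases hks : k = (u (m-1)).succ
            · subst hks; rw [hrow, mul_zero]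
            · rw [h2 k hk0 hks, zero_mul]
          · intro h; exact absurd (Finset.mem_univ _) h
        · intro k hk0 hks
          rw [Nat.add_sub_cancel] at hks
          rw [hL, Matrix.mul_apply]
          apply Finset.sum_eq_zero
          intro l _
          by_cases hl0 : l = 0
          · subst hl0
            rw [hsupp 0 k (Or.inr (by push_neg; exact ⟨hk0, hks⟩)), mul_zero]
          · by_cases hls : l = (u (m-1)).succ
            · subst hls; rw [hrow, mul_zero]
            · rw [h2 l hl0 hls, zero_mul]
  exact (key n hn le_rfl).1
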